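/- arXiv:2510.21091 — 2 statements merged into one kernel-verified Lean document; each statement's English description precedes it below -/
import Mathlib

section
/- Let n ≥ 1, let y_1,…,y_n ∈ {−1,1} be labels with both W = {i : y_i = 1} and W^c = {i : y_i = −1} nonempty, let f_1,…,f_n be points of ℝ^c, and let G be a set of functions from ℝ^c to ℝ. For g ∈ G define R̃²(g) = 1 − [∑_{i=1}^n (y_i − g(f_i))² − ∑_{i=1}^n (g(f_i) − ȳ)²] / ∑_{i=1}^n (y_i − ȳ)². Then sup_{g∈G} |(1/|W|)∑_{i∈W} g(f_i) − (1/|W^c|)∑_{i∈W^c} g(f_i)| = sup_{g∈G} |R̃²(g)|; indeed, for every g ∈ G the two quantities inside the absolute values are equal. (Theorem 2: the IPM between the empirical distributions of (f_i) on W and on W^c equals the supremum of the modified R².) -/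
/-!
Writing `ȳ` for the mean of the labels, `(y - g)² - (g - ȳ)² = (y - ȳ)² - 2 (g - ȳ) (y - ȳ)` and
`∑ (y i - ȳ) = 0` turn `R̃²(g)` into the regression-type ratio `2 ∑ g i (y i - ȳ) / ∑ (y i - ȳ)²`.
For `±1` labels, `y i - ȳ` equals `2|Wᶜ|/n` on `W` and `-2|W|/n` on `Wᶜ`, and `∑ (y i - ȳ)² = 4|W||Wᶜ|/n`,
so that ratio is exactly the difference of the class averages of `g`.
-/

open Finset

section CenteredSums

variable {ι : Type*} [Fintype ι] (y g : ι → ℝ)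

theorem sum_sub_mean_eq_zero :
    ∑ i, (y i - (∑ j, y j) / Fintype.card ι) = 0 := by
  rcases isEmpty_or_nonempty ι with _ | _
  · simp
  · rw [sum_sub_distrib, sum_const, card_univ, nsmul_eq_mul, mul_div_cancel₀]
    · ring
    · exact_mod_cast Fintype.card_ne_zero

theorem sum_sq_sub_sub_sum_sq_sub_mean :
    ∑ i, (y i - g i) ^ 2 - ∑ i, (g i - (∑ j, y j) / Fintype.card ι) ^ 2
      = ∑ i, (y i - (∑ j, y j) / Fintype.card ι) ^ 2
        - 2 * ∑ i, g i * (y i - (∑ j, y j) / Fintype.card ι) := by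
  set m := (∑ j, y j) / Fintype.card ι
  have hm : ∑ i, (y i - m) = 0 := sum_sub_mean_eq_zero y
  have hpoint : ∀ i, (y i - g i) ^ 2 - (g i - m) ^ 2
      = (y i - m) ^ 2 + 2 * m * (y i - m) - 2 * (g i * (y i - m)) := fun i => by ring
  rw [← sum_sub_distrib, sum_congr rfl fun i _ => hpoint i, sum_sub_distrib, sum_add_distrib,
    ← mul_sum, ← mul_sum, hm]
  ring

theorem one_sub_div_sum_sq_sub_mean_eq (hvar : ∑ i, (y i - (∑ j, y j) / Fintype.card ι) ^ 2 ≠ 0) :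
    1 - (∑ i, (y i - g i) ^ 2 - ∑ i, (g i - (∑ j, y j) / Fintype.card ι) ^ 2)
        / ∑ i, (y i - (∑ j, y j) / Fintype.card ι) ^ 2
      = 2 * (∑ i, g i * (y i - (∑ j, y j) / Fintype.card ι))
        / ∑ i, (y i - (∑ j, y j) / Fintype.card ι) ^ 2 := by
  rw [sum_sq_sub_sub_sum_sq_sub_mean, sub_div, div_self hvar]
  ring

end CenteredSums

section BinaryLabels

variable {ι : Type*} [Fintype ι] {y : ι → ℝ}

theorem sum_eq_sum_filter_one_add_sum_filter_neg_one (hy : ∀ i, y i = 1 ∨ y i = -1)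
    (F : ℝ → ι → ℝ) :
    ∑ i, F (y i) i
      = ∑ i ∈ univ.filter (fun i => y i = 1), F 1 i
        + ∑ i ∈ univ.filter (fun i => y i = -1), F (-1) i := by
  have hF : ∀ i, F (y i) i = if y i = 1 then F 1 i else F (-1) i := fun i => by
    rcases hy i with h | h <;> norm_num [h]
  have hneg : univ.filter (fun i => ¬ y i = 1) = univ.filter (fun i => y i = -1) :=
    filter_congr fun i _ => by rcases hy i with h | h <;> norm_num [h]
  rw [sum_congr rfl fun i _ => hF i, sum_ite, hneg]

variable (hy : ∀ i, y i = 1 ∨ y i = -1)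
include hy

theorem card_eq_card_filter_one_add_card_filter_neg_one :
    (Fintype.card ι : ℝ)
      = #(univ.filter (fun i => y i = 1)) + #(univ.filter (fun i => y i = -1)) := by
  simpa using sum_eq_sum_filter_one_add_sum_filter_neg_one hy fun _ _ => (1 : ℝ)

theorem sum_div_card_eq_of_binary :
    (∑ j, y j) / Fintype.card ι
      = (#(univ.filter (fun i => y i = 1)) - #(univ.filter (fun i => y i = -1)) : ℝ)
        / (#(univ.filter (fun i => y i = 1)) + #(univ.filter (fun i => y i = -1))) := by
  rw [card_eq_card_filter_one_add_card_filter_neg_one hy,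
    sum_eq_sum_filter_one_add_sum_filter_neg_one hy fun a _ => a]
  simp [sub_eq_add_neg]

theorem card_filter_one_add_card_filter_neg_one_ne_zero [Nonempty ι] :
    (#(univ.filter (fun i => y i = 1)) + #(univ.filter (fun i => y i = -1)) : ℝ) ≠ 0 := by
  rw [← card_eq_card_filter_one_add_card_filter_neg_one hy]
  exact_mod_cast Fintype.card_ne_zero

theorem sum_sq_sub_mean_of_binary [Nonempty ι] :
    ∑ i, (y i - (∑ j, y j) / Fintype.card ι) ^ 2
      = 4 * #(univ.filter (fun i => y i = 1)) * #(univ.filter (fun i => y i = -1))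
        / (#(univ.filter (fun i => y i = 1)) + #(univ.filter (fun i => y i = -1)) : ℝ) := by
  have hN := card_filter_one_add_card_filter_neg_one_ne_zero hy
  rw [sum_div_card_eq_of_binary hy,
    sum_eq_sum_filter_one_add_sum_filter_neg_one hy fun a _ => (a - _) ^ 2]
  simp only [sum_const, nsmul_eq_mul]
  field_simp
  ring

theorem sum_mul_sub_mean_of_binary [Nonempty ι] (g : ι → ℝ) :
    ∑ i, g i * (y i - (∑ j, y j) / Fintype.card ι)
      = 2 * (#(univ.filter (fun i => y i = -1)) * ∑ i ∈ univ.filter (fun i => y i = 1), g i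
          - #(univ.filter (fun i => y i = 1)) * ∑ i ∈ univ.filter (fun i => y i = -1), g i)
        / (#(univ.filter (fun i => y i = 1)) + #(univ.filter (fun i => y i = -1)) : ℝ) := by
  have hN := card_filter_one_add_card_filter_neg_one_ne_zero hy
  rw [sum_div_card_eq_of_binary hy,
    sum_eq_sum_filter_one_add_sum_filter_neg_one hy fun a i => g i * (a - _),
    ← sum_mul, ← sum_mul]
  field_simp
  ring

theorem average_sub_average_eq_one_sub_div_of_binary
    (hW : (univ.filter (fun i => y i = 1)).Nonempty)
    (hWc : (univ.filter (fun i => y i = -1)).Nonempty) (g : ι → ℝ) :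
    (1 / (#(univ.filter (fun i => y i = 1)) : ℝ)) * ∑ i ∈ univ.filter (fun i => y i = 1), g i
        - (1 / (#(univ.filter (fun i => y i = -1)) : ℝ))
          * ∑ i ∈ univ.filter (fun i => y i = -1), g i
      = 1 - (∑ i, (y i - g i) ^ 2 - ∑ i, (g i - (∑ j, y j) / Fintype.card ι) ^ 2)
          / ∑ i, (y i - (∑ j, y j) / Fintype.card ι) ^ 2 := by
  have : Nonempty ι := ⟨hW.choose⟩
  have hA : (0 : ℝ) < #(univ.filter (fun i => y i = 1)) := by exact_mod_cast hW.card_pos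
  have hB : (0 : ℝ) < #(univ.filter (fun i => y i = -1)) := by exact_mod_cast hWc.card_pos
  have hvar : ∑ i, (y i - (∑ j, y j) / Fintype.card ι) ^ 2 ≠ 0 := by
    rw [sum_sq_sub_mean_of_binary hy]
    positivity
  rw [one_sub_div_sum_sq_sub_mean_eq y g hvar, sum_mul_sub_mean_of_binary hy,
    sum_sq_sub_mean_of_binary hy]
  field_simp
  ring

end BinaryLabels

theorem ipm_eq_sup_Rtilde_general (n c : ℕ) (y : Fin n → ℝ)
    (hy : ∀ i, y i = 1 ∨ y i = -1)
    (hW : (Finset.univ.filter (fun i => y i = 1)).Nonempty)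
    (hWc : (Finset.univ.filter (fun i => y i = -1)).Nonempty)
    (f : Fin n → (Fin c → ℝ)) (G : Set ((Fin c → ℝ) → ℝ)) :
    (∀ g ∈ G,
      (1 / ((Finset.univ.filter (fun i => y i = 1)).card : ℝ)) *
          ∑ i ∈ Finset.univ.filter (fun i => y i = 1), g (f i)
        - (1 / ((Finset.univ.filter (fun i => y i = -1)).card : ℝ)) *
          ∑ i ∈ Finset.univ.filter (fun i => y i = -1), g (f i)
      = 1 - ((∑ i, (y i - g (f i)) ^ 2 - ∑ i, (g (f i) - (∑ j, y j) / n) ^ 2) /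
          ∑ i, (y i - (∑ j, y j) / n) ^ 2))
    ∧
    sSup ((fun g : (Fin c → ℝ) → ℝ =>
        |(1 / ((Finset.univ.filter (fun i => y i = 1)).card : ℝ)) *
            ∑ i ∈ Finset.univ.filter (fun i => y i = 1), g (f i)
          - (1 / ((Finset.univ.filter (fun i => y i = -1)).card : ℝ)) *
            ∑ i ∈ Finset.univ.filter (fun i => y i = -1), g (f i)|) '' G)
      = sSup ((fun g : (Fin c → ℝ) → ℝ =>
          |1 - ((∑ i, (y i - g (f i)) ^ 2
              - ∑ i, (g (f i) - (∑ j, y j) / n) ^ 2) /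
            ∑ i, (y i - (∑ j, y j) / n) ^ 2)|) '' G) := by
  have key := fun g : (Fin c → ℝ) → ℝ =>
    average_sub_average_eq_one_sub_div_of_binary hy hW hWc fun i => g (f i)
  simp only [Fintype.card_fin] at key
  exact ⟨fun g _ => key g, congrArg sSup (Set.image_congr fun g _ => congrArg abs (key g))⟩

/-- Theorem 2: the empirical IPM between the distributions of `f` on `W` and
on `Wᶜ` equals the supremum of the modified coefficient `R̃²`; moreover the
two quantities inside the absolute values coincide for every discriminator. -/
theorem ipm_eq_sup_Rtilde (n c : ℕ) (hn : 1 ≤ n) (y : Fin n → ℝ)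
    (hy : ∀ i, y i = 1 ∨ y i = -1)
    (hW : (Finset.univ.filter (fun i => y i = 1)).Nonempty)
    (hWc : (Finset.univ.filter (fun i => y i = -1)).Nonempty)
    (f : Fin n → (Fin c → ℝ)) (G : Set ((Fin c → ℝ) → ℝ)) :
    (∀ g ∈ G,
      (1 / ((Finset.univ.filter (fun i => y i = 1)).card : ℝ)) *
          ∑ i ∈ Finset.univ.filter (fun i => y i = 1), g (f i)
        - (1 / ((Finset.univ.filter (fun i => y i = -1)).card : ℝ)) *
          ∑ i ∈ Finset.univ.filter (fun i => y i = -1), g (f i)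
      = 1 - ((∑ i, (y i - g (f i)) ^ 2 - ∑ i, (g (f i) - (∑ j, y j) / n) ^ 2) /
          ∑ i, (y i - (∑ j, y j) / n) ^ 2))
    ∧
    sSup ((fun g : (Fin c → ℝ) → ℝ =>
        |(1 / ((Finset.univ.filter (fun i => y i = 1)).card : ℝ)) *
            ∑ i ∈ Finset.univ.filter (fun i => y i = 1), g (f i)
          - (1 / ((Finset.univ.filter (fun i => y i = -1)).card : ℝ)) *
            ∑ i ∈ Finset.univ.filter (fun i => y i = -1), g (f i)|) '' G)
      = sSup ((fun g : (Fin c → ℝ) → ℝ =>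
          |1 - ((∑ i, (y i - g (f i)) ^ 2
              - ∑ i, (g (f i) - (∑ j, y j) / n) ^ 2) /
            ∑ i, (y i - (∑ j, y j) / n) ^ 2)|) '' G) :=
  ipm_eq_sup_Rtilde_general n c y hy hW hWc f G
end

section
/- Let n, M ≥ 1, let c_1,…,c_n ∈ {−1,1}^M encode membership in M subgroup-subsets W_1,…,W_M, with both W_m = {i : c_{im} = 1} and W_m^c = {i : c_{im} = −1} nonempty for each m ∈ [M]. Let f_1,…,f_n ∈ ℝ^c and let G be a set of functions from ℝ^c to ℝ. Then the empirical supremum IPM is bounded by the doubly regressing quantity: max_{m∈[M]} sup_{g∈G} |(1/|W_m|)∑_{i∈W_m} g(f_i) − (1/|W_m^c|)∑_{i∈W_m^c} g(f_i)| ≤ sup_{g∈G} sup_{v} |DR²(v, g)|, where the inner supremum is over unit vectors v ∈ ℝ^M with ∑_{i=1}^n (⟨v, c_i⟩ − μ_{v,g})² > 0. (Inequality (3): supIPM is bounded by the Doubly Regressing gap.) -/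
open Finset

/-- Inner product `⟨v, cᵢ⟩` of a weight vector with the membership code of
sample `i`. -/
noncomputable def ipc {n M : ℕ} (c : Fin n → Fin M → ℝ) (v : Fin M → ℝ)
    (i : Fin n) : ℝ :=
  ∑ m, v m * c i m

/-- `μ_v = (1/n) ∑ᵢ ⟨v, cᵢ⟩`. -/
noncomputable def muV {n M : ℕ} (c : Fin n → Fin M → ℝ) (v : Fin M → ℝ) : ℝ :=
  (∑ i, ipc c v i) / n

/-- The doubly regressing coefficient `DR²(v, g)` computed with discriminator
values `h i = g (f i)`. -/
noncomputable def DR2 {n M : ℕ} (c : Fin n → Fin M → ℝ) (h : Fin n → ℝ)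
    (v : Fin M → ℝ) : ℝ :=
  1 - ((∑ i, (ipc c v i - h i) ^ 2 - ∑ i, (h i - muV c v) ^ 2) /
      ∑ i, (ipc c v i - muV c v) ^ 2)

/-- The admissible weight vectors: unit Euclidean norm and strictly positive
denominator. -/
noncomputable def admissible {n M : ℕ} (c : Fin n → Fin M → ℝ) :
    Set (Fin M → ℝ) :=
  {v | ∑ m, v m ^ 2 = 1 ∧ 0 < ∑ i, (ipc c v i - muV c v) ^ 2}

/-!
Each term of the left-hand side is a term of the right-hand side, attained at the coordinate
vector `v = e_m`. Then `⟨v, cᵢ⟩ = c_{im} =: yᵢ ∈ {±1}`, and expanding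
`(y - h)² = ((y - μ) - (h - μ))²` turns `DR²` into `2 ∑ (y - μ)(h - μ) / ∑ (y - μ)²`.
With `p = |W_m|`, `q = |W_mᶜ|`, the centred vector `y - μ` equals `2q/n` on `W_m` and `-2p/n`
off it, so the numerator is `4(q ∑_{W_m} h - p ∑_{W_mᶜ} h)/n`, the denominator is `4pq/n`, and
their ratio is the difference of the two group means of `h`.
-/

theorem sum_sq_sub_sub_sum_sq_sub {ι : Type*} (s : Finset ι) (y h : ι → ℝ) (μ : ℝ) :
    ∑ i ∈ s, (y i - h i) ^ 2 - ∑ i ∈ s, (h i - μ) ^ 2 =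
      ∑ i ∈ s, (y i - μ) ^ 2 - 2 * ∑ i ∈ s, (y i - μ) * (h i - μ) := by
  rw [mul_sum, ← sum_sub_distrib, ← sum_sub_distrib]
  exact sum_congr rfl fun i _ => by ring

section SignVector

variable {ι : Type*} [Fintype ι] {y : ι → ℝ}

theorem filter_ne_one_eq_filter_eq_neg_one (hy : ∀ i, y i = 1 ∨ y i = -1) :
    ({i | ¬y i = 1} : Finset ι) = ({i | y i = -1} : Finset ι) := by
  ext i
  rcases hy i with h | h <;> simp [h] <;> norm_num

theorem sum_eq_sum_filter_eq_one_add_sum_filter_eq_neg_one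
    (hy : ∀ i, y i = 1 ∨ y i = -1) (k : ι → ℝ) :
    ∑ i, k i = ∑ i ∈ {i | y i = 1}, k i + ∑ i ∈ {i | y i = -1}, k i := by
  rw [← filter_ne_one_eq_filter_eq_neg_one hy, sum_filter_add_sum_filter_not]

theorem card_filter_eq_one_add_card_filter_eq_neg_one (hy : ∀ i, y i = 1 ∨ y i = -1) :
    (#{i | y i = 1} + #{i | y i = -1} : ℝ) = Fintype.card ι := by
  rw [← filter_ne_one_eq_filter_eq_neg_one hy]
  exact_mod_cast card_filter_add_card_filter_not _

theorem sum_eq_card_filter_eq_one_sub_card_filter_eq_neg_one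
    (hy : ∀ i, y i = 1 ∨ y i = -1) :
    ∑ i, y i = #{i | y i = 1} - #{i | y i = -1} := by
  rw [sum_eq_sum_filter_eq_one_add_sum_filter_eq_neg_one hy y,
    sum_congr rfl fun i hi => (mem_filter.1 hi).2,
    sum_congr rfl fun i hi => (mem_filter.1 hi).2]
  simp [sub_eq_add_neg]

theorem sub_mean_of_eq_one (hy : ∀ i, y i = 1 ∨ y i = -1) {i : ι} (hi : y i = 1) :
    y i - (∑ j, y j) / Fintype.card ι = 2 * #{j | y j = -1} / Fintype.card ι := by
  have : Nonempty ι := ⟨i⟩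
  have hN : (Fintype.card ι : ℝ) ≠ 0 := Nat.cast_ne_zero.2 Fintype.card_ne_zero
  rw [hi, sum_eq_card_filter_eq_one_sub_card_filter_eq_neg_one hy]
  rw [← card_filter_eq_one_add_card_filter_eq_neg_one hy] at hN ⊢
  field_simp
  ring

theorem sub_mean_of_eq_neg_one (hy : ∀ i, y i = 1 ∨ y i = -1) {i : ι} (hi : y i = -1) :
    y i - (∑ j, y j) / Fintype.card ι = -(2 * #{j | y j = 1} / Fintype.card ι) := by
  have : Nonempty ι := ⟨i⟩
  have hN : (Fintype.card ι : ℝ) ≠ 0 := Nat.cast_ne_zero.2 Fintype.card_ne_zero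
  rw [hi, sum_eq_card_filter_eq_one_sub_card_filter_eq_neg_one hy]
  rw [← card_filter_eq_one_add_card_filter_eq_neg_one hy] at hN ⊢
  field_simp
  ring

theorem sum_sub_mean_mul (hy : ∀ i, y i = 1 ∨ y i = -1) (k : ι → ℝ) :
    ∑ i, (y i - (∑ j, y j) / Fintype.card ι) * k i =
      2 * #{j | y j = -1} / Fintype.card ι * ∑ i ∈ {i | y i = 1}, k i -
        2 * #{j | y j = 1} / Fintype.card ι * ∑ i ∈ {i | y i = -1}, k i := by
  rw [sum_eq_sum_filter_eq_one_add_sum_filter_eq_neg_one hy, mul_sum, mul_sum,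
    sub_eq_add_neg, ← sum_neg_distrib]
  congr 1 <;> refine sum_congr rfl fun i hi => ?_
  · rw [sub_mean_of_eq_one hy (mem_filter.1 hi).2]
  · rw [sub_mean_of_eq_neg_one hy (mem_filter.1 hi).2, neg_mul]

theorem sum_sub_mean_sq (hy : ∀ i, y i = 1 ∨ y i = -1) :
    ∑ i, (y i - (∑ j, y j) / Fintype.card ι) ^ 2 =
      4 * #{i | y i = 1} * #{i | y i = -1} / Fintype.card ι := by
  rcases isEmpty_or_nonempty ι with _ | _
  · simp
  have hN : (Fintype.card ι : ℝ) ≠ 0 := Nat.cast_ne_zero.2 Fintype.card_ne_zero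
  simp_rw [sq]
  rw [sum_sub_mean_mul hy,
    sum_congr rfl fun i hi => sub_mean_of_eq_one hy (mem_filter.1 hi).2,
    sum_congr rfl fun i hi => sub_mean_of_eq_neg_one hy (mem_filter.1 hi).2]
  simp only [sum_const, nsmul_eq_mul]
  rw [← card_filter_eq_one_add_card_filter_eq_neg_one hy] at hN ⊢
  field_simp
  ring

theorem sum_sub_mean_mul_sub_mean (hy : ∀ i, y i = 1 ∨ y i = -1) (h : ι → ℝ) :
    ∑ i, (y i - (∑ j, y j) / Fintype.card ι) * (h i - (∑ j, y j) / Fintype.card ι) =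
      2 * (#{i | y i = -1} * ∑ i ∈ {i | y i = 1}, h i -
        #{i | y i = 1} * ∑ i ∈ {i | y i = -1}, h i) / Fintype.card ι := by
  rw [sum_sub_mean_mul hy, sum_sub_distrib, sum_sub_distrib]
  simp only [sum_const, nsmul_eq_mul]
  ring

theorem one_sub_div_sum_sub_mean_sq_eq (hy : ∀ i, y i = 1 ∨ y i = -1)
    (hpos : ∃ i, y i = 1) (hneg : ∃ i, y i = -1) (h : ι → ℝ) :
    1 - (∑ i, (y i - h i) ^ 2 - ∑ i, (h i - (∑ j, y j) / Fintype.card ι) ^ 2) /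
        ∑ i, (y i - (∑ j, y j) / Fintype.card ι) ^ 2 =
      1 / #{i | y i = 1} * ∑ i ∈ {i | y i = 1}, h i -
        1 / #{i | y i = -1} * ∑ i ∈ {i | y i = -1}, h i := by
  obtain ⟨ip, hip⟩ := hpos
  obtain ⟨iq, hiq⟩ := hneg
  have hp : (#{i | y i = 1} : ℝ) ≠ 0 :=
    Nat.cast_ne_zero.2 (card_ne_zero_of_mem (mem_filter.2 ⟨mem_univ ip, hip⟩))
  have hq : (#{i | y i = -1} : ℝ) ≠ 0 :=
    Nat.cast_ne_zero.2 (card_ne_zero_of_mem (mem_filter.2 ⟨mem_univ iq, hiq⟩))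
  have : Nonempty ι := ⟨ip⟩
  have hN : (Fintype.card ι : ℝ) ≠ 0 := Nat.cast_ne_zero.2 Fintype.card_ne_zero
  rw [sum_sq_sub_sub_sum_sq_sub, sum_sub_mean_sq hy, sum_sub_mean_mul_sub_mean hy]
  field_simp
  ring

theorem sum_sub_mean_sq_pos (hy : ∀ i, y i = 1 ∨ y i = -1)
    (hpos : ∃ i, y i = 1) (hneg : ∃ i, y i = -1) :
    0 < ∑ i, (y i - (∑ j, y j) / Fintype.card ι) ^ 2 := by
  obtain ⟨ip, hip⟩ := hpos
  obtain ⟨iq, hiq⟩ := hneg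
  have hp : 0 < #{i | y i = 1} := card_pos.2 ⟨ip, mem_filter.2 ⟨mem_univ ip, hip⟩⟩
  have hq : 0 < #{i | y i = -1} := card_pos.2 ⟨iq, mem_filter.2 ⟨mem_univ iq, hiq⟩⟩
  have : Nonempty ι := ⟨ip⟩
  rw [sum_sub_mean_sq hy]
  have := Fintype.card_pos (α := ι)
  positivity

end SignVector

section Coordinate

variable {n M : ℕ} {c : Fin n → Fin M → ℝ} {m : Fin M}

theorem ipc_single (c : Fin n → Fin M → ℝ) (m : Fin M) (i : Fin n) :
    ipc c (Pi.single m 1) i = c i m := by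
  simp [ipc, Pi.single_apply]

theorem muV_single (c : Fin n → Fin M → ℝ) (m : Fin M) :
    muV c (Pi.single m 1) = (∑ i, c i m) / Fintype.card (Fin n) := by
  simp [muV, ipc_single]

theorem single_mem_admissible (hc : ∀ i, c i m = 1 ∨ c i m = -1)
    (hpos : ∃ i, c i m = 1) (hneg : ∃ i, c i m = -1) :
    (Pi.single m 1 : Fin M → ℝ) ∈ admissible c := by
  refine ⟨by simp [Pi.single_apply], ?_⟩
  simp only [ipc_single, muV_single]
  exact sum_sub_mean_sq_pos hc hpos hneg

theorem DR2_single (hc : ∀ i, c i m = 1 ∨ c i m = -1)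
    (hpos : ∃ i, c i m = 1) (hneg : ∃ i, c i m = -1) (h : Fin n → ℝ) :
    DR2 c h (Pi.single m 1) =
      1 / #{i | c i m = 1} * ∑ i ∈ {i | c i m = 1}, h i -
        1 / #{i | c i m = -1} * ∑ i ∈ {i | c i m = -1}, h i := by
  simp only [DR2, ipc_single, muV_single]
  exact one_sub_div_sum_sub_mean_sq_eq hc hpos hneg h

end Coordinate

theorem supIPM_le_DR_gap_general (n M d : ℕ)
    (c : Fin n → Fin M → ℝ) (hc : ∀ i m, c i m = 1 ∨ c i m = -1)
    (hpos : ∀ m, ∃ i, c i m = 1) (hneg : ∀ m, ∃ i, c i m = -1)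
    (f : Fin n → (Fin d → ℝ)) (G : Set ((Fin d → ℝ) → ℝ)) :
    (⨆ m : Fin M, ⨆ g ∈ G, ENNReal.ofReal
        |(1 / ((Finset.univ.filter (fun i => c i m = 1)).card : ℝ)) *
            ∑ i ∈ Finset.univ.filter (fun i => c i m = 1), g (f i)
          - (1 / ((Finset.univ.filter (fun i => c i m = -1)).card : ℝ)) *
            ∑ i ∈ Finset.univ.filter (fun i => c i m = -1), g (f i)|)
      ≤ ⨆ g ∈ G, ⨆ v ∈ admissible c,
          ENNReal.ofReal |DR2 c (fun i => g (f i)) v| := by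
  refine iSup_le fun m => iSup₂_le fun g hg => ?_
  rw [← DR2_single (hc · m) (hpos m) (hneg m)]
  exact le_iSup₂_of_le g hg <|
    le_iSup₂_of_le _ (single_mem_admissible (hc · m) (hpos m) (hneg m)) le_rfl

/-- Inequality (3): the empirical supremum IPM over the subgroup-subsets
`W₁, …, W_M` is bounded by the Doubly Regressing gap (suprema taken in
`ℝ≥0∞`). -/
theorem supIPM_le_DR_gap (n M d : ℕ) (hn : 1 ≤ n) (hM : 1 ≤ M)
    (c : Fin n → Fin M → ℝ) (hc : ∀ i m, c i m = 1 ∨ c i m = -1)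
    (hpos : ∀ m, ∃ i, c i m = 1) (hneg : ∀ m, ∃ i, c i m = -1)
    (f : Fin n → (Fin d → ℝ)) (G : Set ((Fin d → ℝ) → ℝ)) :
    (⨆ m : Fin M, ⨆ g ∈ G, ENNReal.ofReal
        |(1 / ((Finset.univ.filter (fun i => c i m = 1)).card : ℝ)) *
            ∑ i ∈ Finset.univ.filter (fun i => c i m = 1), g (f i)
          - (1 / ((Finset.univ.filter (fun i => c i m = -1)).card : ℝ)) *
            ∑ i ∈ Finset.univ.filter (fun i => c i m = -1), g (f i)|)
      ≤ ⨆ g ∈ G, ⨆ v ∈ admissible c,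
          ENNReal.ofReal |DR2 c (fun i => g (f i)) v| :=
  supIPM_le_DR_gap_general n M d c hc hpos hneg f G
end
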